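/- arXiv:1602.06934 — 3 statements merged into one kernel-verified Lean document; each statement's English description precedes it below -/
import Mathlib

section
/- There exist absolute constants c₀ > 0 and c₁ > 0 such that the following holds: for every integer n ≥ 1, every β ∈ {1,2,4} with d = βn², every real p ≥ 1 and every real q ∈ [2, c₀·d], one has Γ(1 + d/p)/Γ(1 + (d+q)/p) = ((d + p + q)/p)^{−q/p} · (1 + θ)^q for some real θ (depending on n, p, q, β) with |θ| ≤ c₁ · q/n². -/
set_option maxHeartbeats 1000000


open Real

/-- There are absolute constants `c₀, c₁ > 0` such that for every `n ≥ 1`,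
every `β ∈ {1,2,4}` with `d = βn²`, every `p ≥ 1` and every `q ∈ [2, c₀ d]`,
`Γ(1 + d/p)/Γ(1 + (d+q)/p) = ((d+p+q)/p)^{-q/p} (1+θ)^q` for some `θ` with `|θ| ≤ c₁ q/n²`. -/
theorem statement2 :
    ∃ c₀ c₁ : ℝ, 0 < c₀ ∧ 0 < c₁ ∧
      ∀ n : ℕ, 1 ≤ n → ∀ β : ℕ, (β = 1 ∨ β = 2 ∨ β = 4) →
        ∀ p : ℝ, 1 ≤ p → ∀ q : ℝ, 2 ≤ q → q ≤ c₀ * ((β : ℝ) * (n : ℝ) ^ 2) →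
          ∃ θ : ℝ, |θ| ≤ c₁ * q / (n : ℝ) ^ 2 ∧
            Real.Gamma (1 + (β : ℝ) * (n : ℝ) ^ 2 / p) /
                Real.Gamma (1 + ((β : ℝ) * (n : ℝ) ^ 2 + q) / p) =
              (((β : ℝ) * (n : ℝ) ^ 2 + p + q) / p) ^ (-q / p) * (1 + θ) ^ q := by
  refine ⟨1, 15, one_pos, by norm_num, ?_⟩
  intro n hn β hβ p hp q hq2 hqd
  have hp0 : (0:ℝ) < p := lt_of_lt_of_le one_pos hp
  have hn1 : (1:ℝ) ≤ (n:ℝ) := by exact_mod_cast hn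
  have hn2 : (1:ℝ) ≤ (n:ℝ)^2 := by nlinarith
  have hβ1 : (1:ℝ) ≤ (β:ℝ) := by rcases hβ with h | h | h <;> simp [h] <;> norm_num
  set d : ℝ := (β:ℝ) * (n:ℝ)^2 with hdd
  have hdn : (n:ℝ)^2 ≤ d := by nlinarith
  have hd1 : (1:ℝ) ≤ d := le_trans hn2 hdn
  have hd0 : (0:ℝ) < d := by linarith
  have hqd' : q ≤ d := by linarith [hqd, one_mul d]
  have hq0 : (0:ℝ) < q := by linarith
  set x : ℝ := d / p with hxd
  set s : ℝ := q / p with hsd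
  have hx : 0 < x := div_pos hd0 hp0
  have hs : 0 < s := div_pos hq0 hp0
  set f : ℝ → ℝ := fun y => Real.log (Real.Gamma y) with hf
  have hfeq : ∀ y : ℝ, 0 < y → f (y + 1) = f y + Real.log y := by
    intro y hy
    simp only [hf, Real.Gamma_add_one hy.ne',
      Real.log_mul hy.ne' (Real.Gamma_pos_of_pos hy).ne']
    ring
  have hconv := Real.convexOn_log_Gamma
  -- lower slope bound
  have h1 : Real.log x ≤ (f (1 + x + s) - f (1 + x)) / s := by
    have := hconv.slope_mono_adjacent (Set.mem_Ioi.mpr hx)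
      (Set.mem_Ioi.mpr (by linarith : (0:ℝ) < 1 + x + s))
      (by linarith : x < 1 + x) (by linarith : 1 + x < 1 + x + s)
    simp only [Function.comp_apply] at this
    have e1 : f (1 + x) - f x = Real.log x := by
      rw [show (1 + x : ℝ) = x + 1 by ring, hfeq x hx]; ring
    calc Real.log x = (f (1 + x) - f x) / (1 + x - x) := by rw [e1]; norm_num
      _ ≤ (f (1 + x + s) - f (1 + x)) / (1 + x + s - (1 + x)) := this
      _ = (f (1 + x + s) - f (1 + x)) / s := by ring_nf
  -- upper slope bound
  have h2 : (f (1 + x + s) - f (1 + x)) / s ≤ Real.log (1 + x + s) := by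
    have := hconv.slope_mono_adjacent (Set.mem_Ioi.mpr (by linarith : (0:ℝ) < 1 + x))
      (Set.mem_Ioi.mpr (by linarith : (0:ℝ) < 2 + x + s))
      (by linarith : 1 + x < 1 + x + s) (by linarith : 1 + x + s < 2 + x + s)
    simp only [Function.comp_apply] at this
    have e2 : f (2 + x + s) - f (1 + x + s) = Real.log (1 + x + s) := by
      rw [show (2 + x + s : ℝ) = (1 + x + s) + 1 by ring, hfeq (1 + x + s) (by linarith)]
      ring
    calc (f (1 + x + s) - f (1 + x)) / s
        = (f (1 + x + s) - f (1 + x)) / (1 + x + s - (1 + x)) := by ring_nf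
      _ ≤ (f (2 + x + s) - f (1 + x + s)) / (2 + x + s - (1 + x + s)) := this
      _ = Real.log (1 + x + s) := by rw [show (2 + x + s - (1 + x + s) : ℝ) = 1 by ring, div_one, e2]
  set E : ℝ := f (1 + x + s) - f (1 + x) with hE
  set c : ℝ := s * Real.log (1 + x + s) - E with hc
  have hc0 : 0 ≤ c := by
    have := (div_le_iff₀ hs).mp h2
    simp only [hc]; linarith [this]
  have hcU : c ≤ s * (Real.log (1 + x + s) - Real.log x) := by
    have := (le_div_iff₀ hs).mp h1
    simp only [hc]; nlinarith
  set u : ℝ := c / q with hu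
  have hu0 : 0 ≤ u := div_nonneg hc0 hq0.le
  -- bound on u
  have hlog : Real.log (1 + x + s) - Real.log x ≤ (1 + s) / x := by
    rw [← Real.log_div (by linarith) hx.ne']
    have h3 : (0:ℝ) < (1 + x + s) / x := div_pos (by linarith) hx
    have := Real.log_le_sub_one_of_pos h3
    have e3 : (1 + x + s) / x - 1 = (1 + s) / x := by field_simp; ring
    linarith [e3 ▸ this]
  have huB : u ≤ (p + q) / (p * d) := by
    have e4 : s * ((1 + s) / x) / q = (p + q) / (p * d) := by
      simp only [hsd, hxd]; field_simp
    calc u = c / q := rfl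
      _ ≤ s * ((1 + s) / x) / q := by
          gcongr
          exact hcU.trans (by nlinarith [hlog, hs.le])
      _ = (p + q) / (p * d) := e4
  have hpd : 0 < p * d := mul_pos hp0 hd0
  have hu2 : u ≤ 2 := by
    refine huB.trans ?_
    rw [div_le_iff₀ hpd]
    have hA1 : p ≤ p * d := le_mul_of_one_le_right hp0.le hd1
    have hA2 : q ≤ p * d := hqd'.trans (le_mul_of_one_le_left hd0.le hp)
    linarith
  have hu3 : u ≤ 3 / 2 * q / (n:ℝ)^2 := by
    refine huB.trans ?_
    rw [div_le_div_iff₀ hpd (by nlinarith : (0:ℝ) < (n:ℝ)^2)]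
    have hA : p + q ≤ 3 / 2 * (q * p) := by nlinarith
    nlinarith [mul_le_mul_of_nonneg_right hA (by positivity : (0:ℝ) ≤ (n:ℝ)^2),
      mul_le_mul_of_nonneg_left hdn (by positivity : (0:ℝ) ≤ 3 / 2 * q * p)]
  refine ⟨Real.exp u - 1, ?_, ?_⟩
  · -- |θ| bound
    have hθ0 : 0 ≤ Real.exp u - 1 := by linarith [Real.one_le_exp hu0]
    rw [abs_of_nonneg hθ0]
    have hexp2 : Real.exp u ≤ 10 := by
      have h5 : Real.exp u ≤ Real.exp 2 := Real.exp_le_exp.mpr hu2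
      have h6 : Real.exp 2 = Real.exp 1 * Real.exp 1 := by
        rw [← Real.exp_add]; norm_num
      have h10 := Real.exp_one_lt_d9
      have h7 : Real.exp 1 * Real.exp 1 < 2.72 * 2.72 := by
        nlinarith [Real.exp_pos 1]
      nlinarith
    have key : Real.exp u - 1 ≤ u * Real.exp u := by
      have h7 := Real.add_one_le_exp (-u)
      have h8 := Real.exp_pos u
      have h9 : Real.exp (-u) * Real.exp u = 1 := by
        rw [← Real.exp_add]; simp
      nlinarith
    calc Real.exp u - 1 ≤ u * Real.exp u := key
      _ ≤ (3 / 2 * q / (n:ℝ)^2) * 10 := by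
          apply mul_le_mul hu3 hexp2 (Real.exp_pos u).le
          positivity
      _ = 15 * q / (n:ℝ)^2 := by ring
  · -- the identity
    have hG1 : Real.Gamma (1 + x) = Real.exp (f (1 + x)) :=
      (Real.exp_log (Real.Gamma_pos_of_pos (by linarith))).symm
    have hG2 : Real.Gamma (1 + x + s) = Real.exp (f (1 + x + s)) :=
      (Real.exp_log (Real.Gamma_pos_of_pos (by linarith))).symm
    have e5 : 1 + (d + q) / p = 1 + x + s := by
      simp only [hxd, hsd]; field_simp; ring
    have e6 : (d + p + q) / p = 1 + x + s := by
      simp only [hxd, hsd]; field_simp; ring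
    have e7 : -q / p = -s := by rw [hsd, neg_div]
    rw [show (1 + d / p : ℝ) = 1 + x from rfl, e5, e6, e7, hG1, hG2, ← Real.exp_sub]
    have hθexp : (1 + (Real.exp u - 1) : ℝ) = Real.exp u := by ring
    rw [hθexp]
    rw [Real.rpow_def_of_pos (by linarith : (0:ℝ) < 1 + x + s), ← Real.exp_mul, ← Real.exp_add]
    congr 1
    have huq : u * q = c := by rw [hu, div_mul_cancel₀ _ hq0.ne']
    rw [huq]
    simp only [hc, hE]
    ring
end

section
/- There exist absolute constants C₂ > 0 and C₃ > 0 such that for every integer n ≥ 2, every β ∈ {1,2,4} with d = βn², and every real p ≥ 1, writing R = Γ(1 + d/p)/Γ(1 + (d+2)/p), one has (C₂/(p(p+d))) · R² ≤ R² − Γ(1 + d/p)/Γ(1 + (d+4)/p) ≤ (C₃/(p·d)) · R². -/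
/-! By Euler's limit formula, `Q = Γ(a) Γ(a + 2h) / Γ(a + h)²` is the limit of the partial products
of `∏ₖ (1 + h² / ((a + k) (a + 2h + k)))`. Comparing these factors with the telescoping terms
`h² / ((c + k) (c + k + 1))` for `c = a - 1` and for `c = a + 2h` gives
`1 + h² / (a + 2h) ≤ Q ≤ exp (h² / (a - 1))`.

With `a = 1 + d/p` and `h = 2/p` one has `R² - Γ(1 + d/p) / Γ(1 + (d+4)/p) = (1 - 1/Q) R²`, and the
two bounds squeeze `1 - 1/Q` between `4 / (p (p + d) + 4p + 4)` and `4 / (p d)`. -/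

open Real Filter Finset Topology

theorem Finset.one_add_sum_le_prod_one_add {ι R : Type*} [CommSemiring R] [PartialOrder R]
    [IsOrderedRing R] (s : Finset ι) {f : ι → R} (hf : ∀ i ∈ s, 0 ≤ f i) :
    1 + ∑ i ∈ s, f i ≤ ∏ i ∈ s, (1 + f i) := by
  classical
  induction s using Finset.induction_on with
  | empty => simp
  | insert j s hj ih =>
    have hfj := hf j (mem_insert_self j s)
    have hs := sum_nonneg fun i hi => hf i (mem_insert_of_mem hi)
    rw [sum_insert hj, prod_insert hj]
    calc 1 + (f j + ∑ i ∈ s, f i) ≤ (1 + f j) * (1 + ∑ i ∈ s, f i) := by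
          rw [show (1 + f j) * (1 + ∑ i ∈ s, f i) = 1 + (f j + ∑ i ∈ s, f i) + f j * ∑ i ∈ s, f i
            by ring]
          exact le_add_of_nonneg_right (mul_nonneg hfj hs)
      _ ≤ (1 + f j) * ∏ i ∈ s, (1 + f i) :=
          mul_le_mul_of_nonneg_left (ih fun i hi => hf i (mem_insert_of_mem hi))
            (add_nonneg zero_le_one hfj)

theorem sum_range_one_div_mul_add_one {K : Type*} [Field K] [LinearOrder K]
    [IsStrictOrderedRing K] {c : K} (hc : 0 < c) (n : ℕ) :
    ∑ k ∈ range n, 1 / ((c + k) * (c + k + 1)) = 1 / c - 1 / (c + n) := by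
  have hk (k : ℕ) : 1 / ((c + k) * (c + k + 1)) = 1 / (c + k) - 1 / (c + (k + 1 : ℕ)) := by
    have : 0 < c + k := by positivity
    push_cast; field_simp; ring
  simp_rw [hk]
  simpa using sum_range_sub' (fun k : ℕ => 1 / (c + k)) n

namespace Real

variable {a h : ℝ}

theorem GammaSeq_mul_GammaSeq_add_two_mul (ha : 0 < a) (hh : 0 ≤ h) {n : ℕ} (hn : n ≠ 0) :
    GammaSeq a n * GammaSeq (a + 2 * h) n =
      GammaSeq (a + h) n ^ 2 * ∏ k ∈ range (n + 1), (1 + h ^ 2 / ((a + k) * (a + 2 * h + k))) := by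
  have hfactor (k : ℕ) :
      1 + h ^ 2 / ((a + k) * (a + 2 * h + k)) = (a + h + k) ^ 2 / ((a + k) * (a + 2 * h + k)) := by
    have : 0 < a + k := by positivity
    have : 0 < a + 2 * h + k := by positivity
    field_simp; ring
  have hpow : (n : ℝ) ^ a * (n : ℝ) ^ (a + 2 * h) = ((n : ℝ) ^ (a + h)) ^ 2 := by
    have hn0 : (0 : ℝ) < n := by positivity
    rw [sq, ← rpow_add hn0, ← rpow_add hn0]; ring_nf
  have hA : 0 < ∏ k ∈ range (n + 1), (a + k) := prod_pos fun k _ => by positivity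
  have hB : 0 < ∏ k ∈ range (n + 1), (a + h + k) := prod_pos fun k _ => by positivity
  have hC : 0 < ∏ k ∈ range (n + 1), (a + 2 * h + k) := prod_pos fun k _ => by positivity
  simp only [hfactor, prod_div_distrib, prod_mul_distrib, prod_pow, GammaSeq]
  field_simp
  rw [hpow]

theorem tendsto_prod_one_add_sq_div (ha : 0 < a) (hh : 0 ≤ h) :
    Tendsto (fun n => ∏ k ∈ range n, (1 + h ^ 2 / ((a + k) * (a + 2 * h + k)))) atTop
      (𝓝 (Gamma a * Gamma (a + 2 * h) / Gamma (a + h) ^ 2)) := by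
  rw [← tendsto_add_atTop_iff_nat 1]
  have hΓ : Gamma (a + h) ^ 2 ≠ 0 := (pow_pos (Gamma_pos_of_pos (by positivity)) 2).ne'
  refine (((GammaSeq_tendsto_Gamma a).mul (GammaSeq_tendsto_Gamma _)).div
    ((GammaSeq_tendsto_Gamma _).pow 2) hΓ).congr' ?_
  filter_upwards [eventually_ne_atTop 0] with n hn
  have hseq : 0 < GammaSeq (a + h) n := by
    unfold GammaSeq
    have : (0 : ℝ) < n := by positivity
    exact div_pos (by positivity) (prod_pos fun k _ => by positivity)
  simp only [Pi.div_apply, GammaSeq_mul_GammaSeq_add_two_mul ha hh hn]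
  field_simp

theorem Gamma_mul_Gamma_add_two_mul_le (ha : 1 < a) (hh : 0 ≤ h) :
    Gamma a * Gamma (a + 2 * h) ≤ exp (h ^ 2 / (a - 1)) * Gamma (a + h) ^ 2 := by
  have hΓ : 0 < Gamma (a + h) ^ 2 := pow_pos (Gamma_pos_of_pos (by positivity)) 2
  rw [← div_le_iff₀ hΓ]
  refine le_of_tendsto' (tendsto_prod_one_add_sq_div (by linarith) hh) fun n => ?_
  have hterm (k : ℕ) : h ^ 2 / ((a + k) * (a + 2 * h + k)) ≤
      h ^ 2 * (1 / ((a - 1 + k) * (a - 1 + k + 1))) := by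
    have : 0 < a - 1 + k := by positivity
    rw [mul_one_div]
    exact div_le_div_of_nonneg_left (sq_nonneg h) (by positivity) (by nlinarith)
  calc ∏ k ∈ range n, (1 + h ^ 2 / ((a + k) * (a + 2 * h + k)))
      ≤ exp (∑ k ∈ range n, h ^ 2 / ((a + k) * (a + 2 * h + k))) :=
        prod_one_add_le_exp_sum _ fun k => by positivity
    _ ≤ exp (h ^ 2 / (a - 1)) := by
        gcongr
        calc _ ≤ ∑ k ∈ range n, h ^ 2 * (1 / ((a - 1 + k) * (a - 1 + k + 1))) :=
              sum_le_sum fun k _ => hterm k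
          _ = h ^ 2 * (1 / (a - 1) - 1 / (a - 1 + n)) := by
              rw [← mul_sum, sum_range_one_div_mul_add_one (by linarith)]
          _ ≤ h ^ 2 / (a - 1) := by
              have : 0 < a - 1 + n := by positivity
              rw [mul_sub, mul_one_div]
              linarith [show 0 ≤ h ^ 2 * (1 / (a - 1 + n)) by positivity]

theorem one_add_sq_div_mul_Gamma_sq_le (ha : 0 < a) (hh : 0 ≤ h) :
    (1 + h ^ 2 / (a + 2 * h)) * Gamma (a + h) ^ 2 ≤ Gamma a * Gamma (a + 2 * h) := by
  have hΓ : 0 < Gamma (a + h) ^ 2 := pow_pos (Gamma_pos_of_pos (by positivity)) 2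
  have hb : 0 < a + 2 * h := by positivity
  rw [← le_div_iff₀ hΓ]
  have hlim : Tendsto (fun n : ℕ => 1 + h ^ 2 * (1 / (a + 2 * h) - 1 / (a + 2 * h + n))) atTop
      (𝓝 (1 + h ^ 2 / (a + 2 * h))) := by
    have : Tendsto (fun n : ℕ => 1 / (a + 2 * h + n)) atTop (𝓝 0) := by
      simpa only [one_div, Function.comp_def] using tendsto_inv_atTop_zero.comp
        (tendsto_atTop_add_const_left _ (a + 2 * h) tendsto_natCast_atTop_atTop)
    have := ((this.const_sub (1 / (a + 2 * h))).const_mul (h ^ 2)).const_add 1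
    rwa [sub_zero, mul_one_div] at this
  refine le_of_tendsto_of_tendsto' hlim (tendsto_prod_one_add_sq_div ha hh) fun n => ?_
  have hterm (k : ℕ) : h ^ 2 * (1 / ((a + 2 * h + k) * (a + 2 * h + k + 1))) ≤
      h ^ 2 / ((a + k) * (a + 2 * h + k)) := by
    have : 0 < a + k := by positivity
    rw [mul_one_div]
    exact div_le_div_of_nonneg_left (sq_nonneg h) (by positivity) (by nlinarith)
  calc 1 + h ^ 2 * (1 / (a + 2 * h) - 1 / (a + 2 * h + n))
      = 1 + ∑ k ∈ range n, h ^ 2 * (1 / ((a + 2 * h + k) * (a + 2 * h + k + 1))) := by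
        rw [← mul_sum, sum_range_one_div_mul_add_one hb]
    _ ≤ 1 + ∑ k ∈ range n, h ^ 2 / ((a + k) * (a + 2 * h + k)) := by
        gcongr with k; exact hterm k
    _ ≤ _ := one_add_sum_le_prod_one_add _ fun k _ => by positivity

theorem one_sub_Gamma_sq_div_le (ha : 1 < a) (hh : 0 ≤ h) :
    1 - Gamma (a + h) ^ 2 / (Gamma a * Gamma (a + 2 * h)) ≤ h ^ 2 / (a - 1) := by
  have hP : 0 < Gamma a * Gamma (a + 2 * h) :=
    mul_pos (Gamma_pos_of_pos (by linarith)) (Gamma_pos_of_pos (by positivity))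
  have hexp : exp (-(h ^ 2 / (a - 1))) ≤ Gamma (a + h) ^ 2 / (Gamma a * Gamma (a + 2 * h)) := by
    rw [le_div_iff₀ hP, exp_neg, inv_mul_le_iff₀ (exp_pos _)]
    exact Gamma_mul_Gamma_add_two_mul_le ha hh
  linarith [add_one_le_exp (-(h ^ 2 / (a - 1)))]

theorem sq_div_le_one_sub_Gamma_sq_div (ha : 0 < a) (hh : 0 ≤ h) :
    h ^ 2 / (a + 2 * h + h ^ 2) ≤ 1 - Gamma (a + h) ^ 2 / (Gamma a * Gamma (a + 2 * h)) := by
  have hb : 0 < a + 2 * h := by positivity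
  have hP : 0 < Gamma a * Gamma (a + 2 * h) :=
    mul_pos (Gamma_pos_of_pos ha) (Gamma_pos_of_pos hb)
  have hratio : Gamma (a + h) ^ 2 / (Gamma a * Gamma (a + 2 * h)) ≤
      (a + 2 * h) / (a + 2 * h + h ^ 2) := by
    have hlow := one_add_sq_div_mul_Gamma_sq_le ha hh
    rw [one_add_div hb.ne', div_mul_eq_mul_div, div_le_iff₀ hb] at hlow
    rw [div_le_div_iff₀ hP (by positivity)]
    linarith
  have hsplit : h ^ 2 / (a + 2 * h + h ^ 2) = 1 - (a + 2 * h) / (a + 2 * h + h ^ 2) := by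
    field_simp; ring
  linarith

end Real

/-- There are absolute constants `C₂, C₃ > 0` such that for every `n ≥ 2`,
every `β ∈ {1,2,4}` with `d = βn²` and every `p ≥ 1`, writing
`R = Γ(1 + d/p)/Γ(1 + (d+2)/p)`, one has
`(C₂/(p(p+d))) R² ≤ R² − Γ(1 + d/p)/Γ(1 + (d+4)/p) ≤ (C₃/(p d)) R²`. -/
theorem statement3 :
    ∃ C₂ C₃ : ℝ, 0 < C₂ ∧ 0 < C₃ ∧
      ∀ n : ℕ, 2 ≤ n → ∀ β : ℕ, (β = 1 ∨ β = 2 ∨ β = 4) → ∀ p : ℝ, 1 ≤ p →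
        C₂ / (p * (p + (β : ℝ) * (n : ℝ) ^ 2)) *
            (Real.Gamma (1 + (β : ℝ) * (n : ℝ) ^ 2 / p) /
              Real.Gamma (1 + ((β : ℝ) * (n : ℝ) ^ 2 + 2) / p)) ^ 2 ≤
          (Real.Gamma (1 + (β : ℝ) * (n : ℝ) ^ 2 / p) /
              Real.Gamma (1 + ((β : ℝ) * (n : ℝ) ^ 2 + 2) / p)) ^ 2 -
            Real.Gamma (1 + (β : ℝ) * (n : ℝ) ^ 2 / p) /
              Real.Gamma (1 + ((β : ℝ) * (n : ℝ) ^ 2 + 4) / p) ∧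
        (Real.Gamma (1 + (β : ℝ) * (n : ℝ) ^ 2 / p) /
              Real.Gamma (1 + ((β : ℝ) * (n : ℝ) ^ 2 + 2) / p)) ^ 2 -
            Real.Gamma (1 + (β : ℝ) * (n : ℝ) ^ 2 / p) /
              Real.Gamma (1 + ((β : ℝ) * (n : ℝ) ^ 2 + 4) / p) ≤
          C₃ / (p * ((β : ℝ) * (n : ℝ) ^ 2)) *
            (Real.Gamma (1 + (β : ℝ) * (n : ℝ) ^ 2 / p) /
              Real.Gamma (1 + ((β : ℝ) * (n : ℝ) ^ 2 + 2) / p)) ^ 2 := by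
  refine ⟨1 / 2, 4, by norm_num, by norm_num, fun n hn β hβ p hp => ?_⟩
  set d : ℝ := β * n ^ 2
  have hd : 1 ≤ d := by
    have hβ1 : (1 : ℝ) ≤ β := by rcases hβ with rfl | rfl | rfl <;> norm_num
    have hn1 : (1 : ℝ) ≤ n := by exact_mod_cast (by omega : 1 ≤ n)
    exact one_le_mul_of_one_le_of_one_le hβ1 (one_le_pow₀ hn1)
  have hd0 : 0 < d := by linarith
  have hp0 : 0 < p := by linarith
  have hdeficit (x y z : ℝ) (hx : x ≠ 0) (hy : y ≠ 0) :
      (x / y) ^ 2 - x / z = (1 - y ^ 2 / (x * z)) * (x / y) ^ 2 := by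
    field_simp
  rw [show 1 + (d + 2) / p = (1 + d / p) + 2 / p by ring,
    show 1 + (d + 4) / p = (1 + d / p) + 2 * (2 / p) by ring,
    hdeficit _ _ _ (Gamma_pos_of_pos (by positivity)).ne' (Gamma_pos_of_pos (by positivity)).ne']
  refine ⟨mul_le_mul_of_nonneg_right ?_ (sq_nonneg _),
    mul_le_mul_of_nonneg_right ?_ (sq_nonneg _)⟩
  · refine le_trans ?_ (sq_div_le_one_sub_Gamma_sq_div (by positivity) (by positivity))
    rw [show (2 / p) ^ 2 / (1 + d / p + 2 * (2 / p) + (2 / p) ^ 2) = 4 / (p * (p + d) + 4 * p + 4)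
      by field_simp; ring, div_le_div_iff₀ (by positivity) (by positivity)]
    nlinarith
  · refine (one_sub_Gamma_sq_div_le (lt_add_of_pos_right 1 (div_pos hd0 hp0))
      (by positivity)).trans_eq ?_
    rw [add_sub_cancel_left]
    field_simp
    norm_num
end

section
/- Fix an integer n ≥ 2, an EVEN positive integer a, a positive integer b, a nonnegative integer c and a real p ≥ 1. Let ξ ≥ 0 and let f : ℝⁿ∖{0} → [0,∞) be a symmetric measurable function which is positive on a set of positive Lebesgue measure and for which all integrals below are finite. Then: (i) if ξ < a, M_p((|x₂|^ξ x₁^a/(x₁^a − x₂^a)) f(x)) = (1/2) · M_p(((|x₁|^{a−ξ} − |x₂|^{a−ξ})/(|x₁|^a − |x₂|^a)) · |x₁ x₂|^ξ · f(x)) > 0; (ii) if ξ = a, M_p((|x₂|^ξ x₁^a/(x₁^a − x₂^a)) f(x)) = 0; (iii) if ξ > a, M_p((|x₂|^ξ x₁^a/(x₁^a − x₂^a)) f(x)) = (1/2) · M_p(((|x₂|^{ξ−a} − |x₁|^{ξ−a})/(|x₁|^a − |x₂|^a)) · |x₁ x₂|^a · f(x)) < 0. (All integrands are defined almost everywhere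 with respect to the density f_{a,b,c}, which vanishes where x₁^a = x₂^a.) -/
/-!
Swapping two coordinates preserves Lebesgue measure, `f`, `f_{a,b,c}` and `‖x‖_p`, so with
`g(u, v) = |v|^ξ u^a / (u^a - v^a)` the moment of `g(x₁, x₂) f` equals that of `g(x₂, x₁) f`,
hence is half the moment of `(g(u, v) + g(v, u)) f`. For even `a` this kernel is
`(|u|^a |v|^ξ - |u|^ξ |v|^a) / (|u|^a - |v|^a)`, which factors as
`(|u|^(a-ξ) - |v|^(a-ξ)) / (|u|^a - |v|^a) · |uv|^ξ` or as
`(|v|^(ξ-a) - |u|^(ξ-a)) / (|u|^a - |v|^a) · |uv|^a`, and `(U^s - V^s) / (U^a - V^a) > 0` for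
`s > 0` and `U ≠ V`. The signs are strict because `f_{a,b,c} > 0`, `x₁ x₂ ≠ 0` and `|x₁| ≠ |x₂|`
off finitely many hyperplanes, while `f > 0` on a set of positive measure.
-/

open MeasureTheory Real

/-- The density `∏_{i<j} |x_i^a - x_j^a|^b · ∏_i |x_i|^c` on `ℝⁿ`. -/
noncomputable def fabc (n a b c : ℕ) (x : Fin n → ℝ) : ℝ :=
  (∏ i : Fin n, ∏ j : Fin n, if i < j then |x i ^ a - x j ^ a| ^ b else 1) *
    ∏ i : Fin n, |x i| ^ c

/-- `M_p(g) = ∫ g(x) f_{a,b,c}(x) exp(-‖x‖_p^p) dx`. -/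
noncomputable def Mp (n a b c : ℕ) (p : ℝ) (g : (Fin n → ℝ) → ℝ) : ℝ :=
  ∫ x : Fin n → ℝ, g x * fabc n a b c x * Real.exp (-∑ i, |x i| ^ p)

lemma integral_eq_half_integral_add_comp {α : Type*} [MeasurableSpace α] {μ : Measure α}
    {τ : α → α} (hτ : MeasurePreserving τ μ μ) (hτe : MeasurableEmbedding τ) {G : α → ℝ}
    (hG : Integrable G μ) : ∫ x, G x ∂μ = 1 / 2 * ∫ x, (G x + G (τ x)) ∂μ := by
  have hGτ : Integrable (fun x => G (τ x)) μ := (hτ.integrable_comp_emb hτe).2 hG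
  rw [integral_add hG hGτ, hτ.integral_comp hτe]
  ring

lemma integral_pos_of_ae_pos_on {α : Type*} [MeasurableSpace α] {μ : Measure α} {T : α → ℝ}
    {s : Set α} (hT : 0 ≤ T) (hTi : Integrable T μ) (hs : 0 < μ s)
    (hpos : ∀ᵐ x ∂μ, x ∈ s → 0 < T x) : 0 < ∫ x, T x ∂μ := by
  rw [integral_pos_iff_support_of_nonneg hT hTi]
  exact hs.trans_le (measure_mono_ae (hpos.mono fun x hx hxs => (hx hxs).ne'))

section Permutations

variable {ι : Type*} (σ : Equiv.Perm ι)

lemma coe_piCongrLeft_symm_perm :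
    ⇑(MeasurableEquiv.piCongrLeft (fun _ : ι => ℝ) σ.symm) = fun x i => x (σ i) := by
  ext x i
  simp [MeasurableEquiv.piCongrLeft, Equiv.piCongrLeft_apply_eq_cast]

lemma measurableEmbedding_comp_perm : MeasurableEmbedding (fun (x : ι → ℝ) i => x (σ i)) :=
  coe_piCongrLeft_symm_perm σ ▸ MeasurableEquiv.measurableEmbedding _

lemma measurePreserving_comp_perm [Fintype ι] :
    MeasurePreserving (fun (x : ι → ℝ) i => x (σ i)) :=
  coe_piCongrLeft_symm_perm σ ▸ volume_measurePreserving_piCongrLeft _ _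

end Permutations

section NullSets

lemma ae_ne_zero_of_linearMap {E : Type*} [NormedAddCommGroup E] [NormedSpace ℝ E]
    [FiniteDimensional ℝ E] [MeasurableSpace E] [BorelSpace E] (μ : Measure E)
    [μ.IsAddHaarMeasure] {φ : E →ₗ[ℝ] ℝ} (hφ : φ ≠ 0) : ∀ᵐ x ∂μ, φ x ≠ 0 := by
  have hker : LinearMap.ker φ ≠ ⊤ := by simpa [LinearMap.ker_eq_top] using hφ
  simp only [ae_iff, not_not]
  exact Measure.addHaar_submodule μ _ hker

variable {n : ℕ}

lemma ae_apply_ne_zero (i : Fin n) : ∀ᵐ x : Fin n → ℝ, x i ≠ 0 :=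
  ae_ne_zero_of_linearMap volume (φ := (LinearMap.proj i : (Fin n → ℝ) →ₗ[ℝ] ℝ)) fun h => by
    simpa using LinearMap.congr_fun h (Pi.single i 1 : Fin n → ℝ)

lemma ae_apply_sub_mul_apply_ne_zero {i j : Fin n} (hij : i ≠ j) (t : ℝ) :
    ∀ᵐ x : Fin n → ℝ, x i - t * x j ≠ 0 := by
  set φ : (Fin n → ℝ) →ₗ[ℝ] ℝ := LinearMap.proj i - t • LinearMap.proj j
  have hφ : φ ≠ 0 := fun h => by
    simpa [φ, hij.symm] using LinearMap.congr_fun h (Pi.single i 1 : Fin n → ℝ)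
  filter_upwards [ae_ne_zero_of_linearMap volume hφ] with x hx
  simpa [φ] using hx

lemma ae_abs_apply_ne_abs_apply {i j : Fin n} (hij : i ≠ j) :
    ∀ᵐ x : Fin n → ℝ, |x i| ≠ |x j| := by
  filter_upwards [ae_apply_sub_mul_apply_ne_zero hij 1,
    ae_apply_sub_mul_apply_ne_zero hij (-1)] with x hsub hadd habs
  rcases abs_eq_abs.1 habs with h | h
  · exact hsub (by rw [h]; ring)
  · exact hadd (by rw [h]; ring)

end NullSets

lemma prod_ite_lt_sq {ι M : Type*} [Fintype ι] [LinearOrder ι] [CommMonoid M]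
    {h : ι → ι → M} (hsymm : ∀ i j, h i j = h j i) :
    (∏ i, ∏ j, if i < j then h i j else 1) ^ 2 = ∏ i, ∏ j, if i ≠ j then h i j else 1 := by
  calc (∏ i, ∏ j, if i < j then h i j else 1) ^ 2
      = (∏ i, ∏ j, if i < j then h i j else 1) * ∏ i, ∏ j, if j < i then h i j else 1 := by
        rw [sq, Finset.prod_comm (f := fun i j => if j < i then h i j else 1)]
        simp_rw [hsymm]
    _ = ∏ i, ∏ j, if i ≠ j then h i j else 1 := by
        simp_rw [← Finset.prod_mul_distrib]
        refine Finset.prod_congr rfl fun i _ => Finset.prod_congr rfl fun j _ => ?_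
        rcases lt_trichotomy i j with hij | rfl | hij
        · simp [hij, hij.ne, hij.not_gt]
        · simp
        · simp [hij, hij.ne', hij.not_gt]

lemma prod_ite_lt_comp_perm {ι : Type*} [Fintype ι] [LinearOrder ι] {h : ι → ι → ℝ}
    (hsymm : ∀ i j, h i j = h j i) (hnonneg : ∀ i j, 0 ≤ h i j) (σ : Equiv.Perm ι) :
    (∏ i, ∏ j, if i < j then h (σ i) (σ j) else 1) = ∏ i, ∏ j, if i < j then h i j else 1 := by
  have hprod_nonneg (k : ι → ι → ℝ) (hk : ∀ i j, 0 ≤ k i j) :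
      0 ≤ ∏ i, ∏ j, if i < j then k i j else 1 :=
    Finset.prod_nonneg fun i _ => Finset.prod_nonneg fun j _ => by split_ifs <;> simp [hk]
  rw [← pow_left_inj₀ (hprod_nonneg _ fun i j => hnonneg _ _) (hprod_nonneg _ hnonneg) two_ne_zero,
    prod_ite_lt_sq fun i j => hsymm _ _, prod_ite_lt_sq hsymm]
  rw [← Equiv.prod_comp σ (fun i => ∏ j, if i ≠ j then h i j else 1)]
  refine Finset.prod_congr rfl fun i _ => ?_
  rw [← Equiv.prod_comp σ (fun j => if σ i ≠ j then h (σ i) j else 1)]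
  simp only [σ.injective.ne_iff]

section Density

variable {n a b c : ℕ}

lemma fabc_nonneg (x : Fin n → ℝ) : 0 ≤ fabc n a b c x :=
  mul_nonneg (Finset.prod_nonneg fun i _ => Finset.prod_nonneg fun j _ => by split_ifs <;> positivity)
    (Finset.prod_nonneg fun i _ => by positivity)

lemma fabc_pos {x : Fin n → ℝ} (hx0 : ∀ i, x i ≠ 0) (hx : ∀ i j, i ≠ j → x i ^ a ≠ x j ^ a) :
    0 < fabc n a b c x := by
  refine mul_pos (Finset.prod_pos fun i _ => Finset.prod_pos fun j _ => ?_)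
    (Finset.prod_pos fun i _ => by have := hx0 i; positivity)
  split_ifs with hij
  · exact pow_pos (abs_pos.2 (sub_ne_zero.2 (hx i j hij.ne))) b
  · exact one_pos

lemma fabc_comp_perm (σ : Equiv.Perm (Fin n)) (x : Fin n → ℝ) :
    fabc n a b c (fun i => x (σ i)) = fabc n a b c x := by
  unfold fabc
  rw [prod_ite_lt_comp_perm (h := fun i j => |x i ^ a - x j ^ a| ^ b)
      (fun i j => by rw [abs_sub_comm]) (fun i j => by positivity),
    Equiv.prod_comp σ (fun i => |x i| ^ c)]

lemma ae_fabc_pos (ha : a ≠ 0) (heven : Even a) : ∀ᵐ x : Fin n → ℝ, 0 < fabc n a b c x := by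
  have hzero : ∀ᵐ x : Fin n → ℝ, ∀ i, x i ≠ 0 := ae_all_iff.2 ae_apply_ne_zero
  have habs : ∀ᵐ x : Fin n → ℝ, ∀ i j, i ≠ j → |x i| ≠ |x j| :=
    ae_all_iff.2 fun i => ae_all_iff.2 fun j => by
      by_cases hij : i = j
      · simp [hij]
      · filter_upwards [ae_abs_apply_ne_abs_apply hij] with x hx _ using hx
  filter_upwards [hzero, habs] with x hx0 hx
  refine fabc_pos hx0 fun i j hij hpow => hx i j hij ?_
  rwa [← heven.pow_abs, ← heven.pow_abs (x j), pow_left_inj₀ (abs_nonneg _) (abs_nonneg _) ha]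
    at hpow

end Density

lemma cross_add_cross_swap {a : ℕ} (heven : Even a) (ξ u v : ℝ) :
    |v| ^ ξ * u ^ a / (u ^ a - v ^ a) + |u| ^ ξ * v ^ a / (v ^ a - u ^ a) =
      (|u| ^ a * |v| ^ ξ - |u| ^ ξ * |v| ^ a) / (|u| ^ a - |v| ^ a) := by
  rw [heven.pow_abs, heven.pow_abs, ← neg_sub (u ^ a), div_neg]
  ring

lemma cross_add_cross_swap_eq_mul_rpow {a : ℕ} (ha : a ≠ 0) (heven : Even a) (ξ u v : ℝ) :
    |v| ^ ξ * u ^ a / (u ^ a - v ^ a) + |u| ^ ξ * v ^ a / (v ^ a - u ^ a) =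
      (|u| ^ ((a : ℝ) - ξ) - |v| ^ ((a : ℝ) - ξ)) / (|u| ^ a - |v| ^ a) * |u * v| ^ ξ := by
  have hsplit (w : ℝ) : |w| ^ a = |w| ^ ξ * |w| ^ ((a : ℝ) - ξ) := by
    rw [← rpow_add' (abs_nonneg w) (by simpa using ha), add_sub_cancel, rpow_natCast]
  rw [cross_add_cross_swap heven, hsplit u, hsplit v, abs_mul,
    mul_rpow (abs_nonneg u) (abs_nonneg v)]
  ring

lemma cross_add_cross_swap_eq_mul_pow {a : ℕ} (heven : Even a) {ξ : ℝ} (hξ : ξ ≠ 0) (u v : ℝ) :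
    |v| ^ ξ * u ^ a / (u ^ a - v ^ a) + |u| ^ ξ * v ^ a / (v ^ a - u ^ a) =
      (|v| ^ (ξ - a) - |u| ^ (ξ - a)) / (|u| ^ a - |v| ^ a) * |u * v| ^ a := by
  have hsplit (w : ℝ) : |w| ^ ξ = |w| ^ (ξ - a) * |w| ^ a := by
    rw [← rpow_natCast, ← rpow_add' (abs_nonneg w) (by simpa using hξ), sub_add_cancel]
  rw [cross_add_cross_swap heven, hsplit u, hsplit v, abs_mul, mul_pow]
  ring

lemma cross_add_cross_swap_self {a : ℕ} (heven : Even a) (u v : ℝ) :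
    |v| ^ (a : ℝ) * u ^ a / (u ^ a - v ^ a) + |u| ^ (a : ℝ) * v ^ a / (v ^ a - u ^ a) = 0 := by
  rw [cross_add_cross_swap heven, rpow_natCast, rpow_natCast]
  ring

lemma rpow_sub_rpow_div_pow_sub_pow_nonneg {U V s : ℝ} (hU : 0 ≤ U) (hV : 0 ≤ V) (hs : 0 ≤ s)
    (a : ℕ) : 0 ≤ (U ^ s - V ^ s) / (U ^ a - V ^ a) := by
  rcases lt_trichotomy U V with hUV | rfl | hUV
  · exact div_nonneg_of_nonpos (sub_nonpos.2 (rpow_le_rpow hU hUV.le hs))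
      (sub_nonpos.2 (pow_le_pow_left₀ hU hUV.le a))
  · simp
  · exact div_nonneg (sub_nonneg.2 (rpow_le_rpow hV hUV.le hs))
      (sub_nonneg.2 (pow_le_pow_left₀ hV hUV.le a))

lemma rpow_sub_rpow_div_pow_sub_pow_pos {U V s : ℝ} (hU : 0 ≤ U) (hV : 0 ≤ V) (hs : 0 < s)
    {a : ℕ} (ha : a ≠ 0) (hUV : U ≠ V) : 0 < (U ^ s - V ^ s) / (U ^ a - V ^ a) := by
  rcases hUV.lt_or_gt with hUV | hUV
  · exact div_pos_of_neg_of_neg (sub_neg.2 (rpow_lt_rpow hU hUV hs))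
      (sub_neg.2 (pow_lt_pow_left₀ hUV hU ha))
  · exact div_pos (sub_pos.2 (rpow_lt_rpow hV hUV hs)) (sub_pos.2 (pow_lt_pow_left₀ hUV hV ha))

section Mp

variable {n a b c : ℕ} {p : ℝ} {f : (Fin n → ℝ) → ℝ}

lemma integrand_comp_swap
    (hsym : ∀ (σ : Equiv.Perm (Fin n)) (x : Fin n → ℝ), f (fun i => x (σ i)) = f x)
    (i j : Fin n) (g : ℝ → ℝ → ℝ) (x : Fin n → ℝ) :
    g (x (Equiv.swap i j i)) (x (Equiv.swap i j j)) * f (fun k => x (Equiv.swap i j k)) *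
        fabc n a b c (fun k => x (Equiv.swap i j k)) *
        exp (-∑ k, |x (Equiv.swap i j k)| ^ p) =
      g (x j) (x i) * f x * fabc n a b c x * exp (-∑ k, |x k| ^ p) := by
  simp only [Equiv.swap_apply_left, Equiv.swap_apply_right, hsym, fabc_comp_perm,
    Equiv.sum_comp (Equiv.swap i j) (fun k => |x k| ^ p)]

lemma Mp_eq_half_Mp_add_swap
    (hsym : ∀ (σ : Equiv.Perm (Fin n)) (x : Fin n → ℝ), f (fun i => x (σ i)) = f x)
    (i j : Fin n) {g K : ℝ → ℝ → ℝ} (hK : ∀ u v, g u v + g v u = K u v)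
    (hg : Integrable fun x : Fin n → ℝ =>
      g (x i) (x j) * f x * fabc n a b c x * exp (-∑ k, |x k| ^ p)) :
    Mp n a b c p (fun x => g (x i) (x j) * f x) =
      1 / 2 * Mp n a b c p (fun x => K (x i) (x j) * f x) := by
  unfold Mp
  rw [integral_eq_half_integral_add_comp (measurePreserving_comp_perm (Equiv.swap i j))
    (measurableEmbedding_comp_perm _) hg]
  simp only [integrand_comp_swap hsym, ← hK]
  congr 2 with x
  ring

lemma integrable_add_swap
    (hsym : ∀ (σ : Equiv.Perm (Fin n)) (x : Fin n → ℝ), f (fun i => x (σ i)) = f x)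
    (i j : Fin n) {g K : ℝ → ℝ → ℝ} (hK : ∀ u v, g u v + g v u = K u v)
    (hg : Integrable fun x : Fin n → ℝ =>
      g (x i) (x j) * f x * fabc n a b c x * exp (-∑ k, |x k| ^ p)) :
    Integrable fun x : Fin n → ℝ =>
      K (x i) (x j) * f x * fabc n a b c x * exp (-∑ k, |x k| ^ p) := by
  have hswap := ((measurePreserving_comp_perm (Equiv.swap i j)).integrable_comp_emb
    (measurableEmbedding_comp_perm _)).2 hg
  simp only [Function.comp_def, integrand_comp_swap hsym] at hswap
  refine (hg.add hswap).congr (Filter.Eventually.of_forall fun x => ?_)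
  simp only [Pi.add_apply, ← hK]
  ring

lemma Mp_kernel_pos (ha : a ≠ 0) (heven : Even a) {i j : Fin n} (hij : i ≠ j)
    {K : ℝ → ℝ → ℝ} (hK0 : ∀ u v, 0 ≤ K u v)
    (hKpos : ∀ u v, u ≠ 0 → v ≠ 0 → |u| ≠ |v| → 0 < K u v)
    (hf0 : ∀ x, 0 ≤ f x) (hpos : 0 < volume {x : Fin n → ℝ | 0 < f x})
    (hint : Integrable fun x : Fin n → ℝ =>
      K (x i) (x j) * f x * fabc n a b c x * exp (-∑ k, |x k| ^ p)) :
    0 < Mp n a b c p (fun x => K (x i) (x j) * f x) := by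
  refine integral_pos_of_ae_pos_on (fun x => ?_) hint hpos ?_
  · exact mul_nonneg (mul_nonneg (mul_nonneg (hK0 _ _) (hf0 x)) (fabc_nonneg x)) (exp_pos _).le
  · filter_upwards [ae_apply_ne_zero i, ae_apply_ne_zero j, ae_abs_apply_ne_abs_apply hij,
      ae_fabc_pos (b := b) (c := c) ha heven] with x hxi hxj hxij hfabc hfx
    exact mul_pos (mul_pos (mul_pos (hKpos _ _ hxi hxj hxij) hfx) hfabc) (exp_pos _)

end Mp

section CrossTerm

variable {n a b c : ℕ} {p ξ : ℝ} {f : (Fin n → ℝ) → ℝ} {i j : Fin n}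

lemma Mp_cross_of_lt (ha : a ≠ 0) (heven : Even a) (hij : i ≠ j) (hξ : ξ < a)
    (hsym : ∀ (σ : Equiv.Perm (Fin n)) (x : Fin n → ℝ), f (fun i => x (σ i)) = f x)
    (hf0 : ∀ x, 0 ≤ f x) (hpos : 0 < volume {x : Fin n → ℝ | 0 < f x})
    (hint : Integrable fun x : Fin n → ℝ =>
      (|x j| ^ ξ * x i ^ a / (x i ^ a - x j ^ a) * f x) * fabc n a b c x *
        exp (-∑ k, |x k| ^ p)) :
    Mp n a b c p (fun x => |x j| ^ ξ * x i ^ a / (x i ^ a - x j ^ a) * f x) =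
        1 / 2 * Mp n a b c p (fun x =>
          (|x i| ^ ((a : ℝ) - ξ) - |x j| ^ ((a : ℝ) - ξ)) / (|x i| ^ a - |x j| ^ a) *
            |x i * x j| ^ ξ * f x) ∧
      0 < Mp n a b c p (fun x => |x j| ^ ξ * x i ^ a / (x i ^ a - x j ^ a) * f x) := by
  have hK := cross_add_cross_swap_eq_mul_rpow ha heven ξ
  have hhalf := Mp_eq_half_Mp_add_swap hsym i j hK hint
  refine ⟨hhalf, hhalf ▸ mul_pos one_half_pos (Mp_kernel_pos ha heven hij
    (fun u v => ?_) (fun u v hu hv huv => ?_) hf0 hpos (integrable_add_swap hsym i j hK hint))⟩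
  · exact mul_nonneg (rpow_sub_rpow_div_pow_sub_pow_nonneg (abs_nonneg u) (abs_nonneg v)
      (by linarith) a) (by positivity)
  · exact mul_pos (rpow_sub_rpow_div_pow_sub_pow_pos (abs_nonneg u) (abs_nonneg v)
      (by linarith) ha huv) (rpow_pos_of_pos (abs_pos.2 (mul_ne_zero hu hv)) ξ)

lemma Mp_cross_self (heven : Even a)
    (hsym : ∀ (σ : Equiv.Perm (Fin n)) (x : Fin n → ℝ), f (fun i => x (σ i)) = f x)
    (hint : Integrable fun x : Fin n → ℝ =>
      (|x j| ^ (a : ℝ) * x i ^ a / (x i ^ a - x j ^ a) * f x) * fabc n a b c x *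
        exp (-∑ k, |x k| ^ p)) :
    Mp n a b c p (fun x => |x j| ^ (a : ℝ) * x i ^ a / (x i ^ a - x j ^ a) * f x) = 0 := by
  rw [Mp_eq_half_Mp_add_swap hsym i j (cross_add_cross_swap_self heven) hint]
  simp [Mp]

lemma Mp_cross_of_gt (ha : a ≠ 0) (heven : Even a) (hij : i ≠ j) (hξ : a < ξ)
    (hsym : ∀ (σ : Equiv.Perm (Fin n)) (x : Fin n → ℝ), f (fun i => x (σ i)) = f x)
    (hf0 : ∀ x, 0 ≤ f x) (hpos : 0 < volume {x : Fin n → ℝ | 0 < f x})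
    (hint : Integrable fun x : Fin n → ℝ =>
      (|x j| ^ ξ * x i ^ a / (x i ^ a - x j ^ a) * f x) * fabc n a b c x *
        exp (-∑ k, |x k| ^ p)) :
    Mp n a b c p (fun x => |x j| ^ ξ * x i ^ a / (x i ^ a - x j ^ a) * f x) =
        1 / 2 * Mp n a b c p (fun x =>
          (|x j| ^ (ξ - a) - |x i| ^ (ξ - a)) / (|x i| ^ a - |x j| ^ a) *
            |x i * x j| ^ a * f x) ∧
      Mp n a b c p (fun x => |x j| ^ ξ * x i ^ a / (x i ^ a - x j ^ a) * f x) < 0 := by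
  have hK := cross_add_cross_swap_eq_mul_pow heven (a.cast_nonneg.trans_lt hξ).ne'
  have hhalf := Mp_eq_half_Mp_add_swap hsym i j hK hint
  have hneg := Mp_kernel_pos (p := p) ha heven hij
    (K := fun u v => -((|v| ^ (ξ - a) - |u| ^ (ξ - a)) / (|u| ^ a - |v| ^ a) * |u * v| ^ a))
    (fun u v => ?_) (fun u v hu hv huv => ?_) hf0 hpos
    (by simpa only [Pi.neg_def, neg_mul] using (integrable_add_swap hsym i j hK hint).neg)
  · refine ⟨hhalf, ?_⟩
    simp only [Mp, neg_mul, integral_neg] at hneg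
    rw [hhalf, Mp]
    linarith
  · rw [← neg_mul, ← neg_div, neg_sub]
    exact mul_nonneg (rpow_sub_rpow_div_pow_sub_pow_nonneg (abs_nonneg u) (abs_nonneg v)
      (by linarith) a) (by positivity)
  · rw [← neg_mul, ← neg_div, neg_sub]
    exact mul_pos (rpow_sub_rpow_div_pow_sub_pow_pos (abs_nonneg u) (abs_nonneg v)
      (by linarith) ha huv) (pow_pos (abs_pos.2 (mul_ne_zero hu hv)) a)

end CrossTerm

/-- sign of the cross term for even `a`. -/
theorem statement10 (n a b c : ℕ) (hn : 2 ≤ n) (ha : 1 ≤ a) (haeven : Even a)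
    (p : ℝ) (ξ : ℝ)
    (f : (Fin n → ℝ) → ℝ) (hnonneg : ∀ x, 0 ≤ f x)
    (hsym : ∀ (σ : Equiv.Perm (Fin n)) (x : Fin n → ℝ), f (fun i => x (σ i)) = f x)
    (hpos : 0 < volume {x : Fin n → ℝ | 0 < f x})
    (hint_main : Integrable (fun x : Fin n → ℝ =>
      (|x ⟨1, by omega⟩| ^ ξ * x ⟨0, by omega⟩ ^ a /
          (x ⟨0, by omega⟩ ^ a - x ⟨1, by omega⟩ ^ a) * f x) *
        fabc n a b c x * Real.exp (-∑ i, |x i| ^ p))) :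
    (ξ < (a : ℝ) →
      Mp n a b c p (fun x =>
          |x ⟨1, by omega⟩| ^ ξ * x ⟨0, by omega⟩ ^ a /
            (x ⟨0, by omega⟩ ^ a - x ⟨1, by omega⟩ ^ a) * f x) =
        (1 / 2) * Mp n a b c p (fun x =>
          (|x ⟨0, by omega⟩| ^ ((a : ℝ) - ξ) - |x ⟨1, by omega⟩| ^ ((a : ℝ) - ξ)) /
            (|x ⟨0, by omega⟩| ^ a - |x ⟨1, by omega⟩| ^ a) *
            |x ⟨0, by omega⟩ * x ⟨1, by omega⟩| ^ ξ * f x) ∧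
      0 < Mp n a b c p (fun x =>
          |x ⟨1, by omega⟩| ^ ξ * x ⟨0, by omega⟩ ^ a /
            (x ⟨0, by omega⟩ ^ a - x ⟨1, by omega⟩ ^ a) * f x)) ∧
    (ξ = (a : ℝ) →
      Mp n a b c p (fun x =>
          |x ⟨1, by omega⟩| ^ ξ * x ⟨0, by omega⟩ ^ a /
            (x ⟨0, by omega⟩ ^ a - x ⟨1, by omega⟩ ^ a) * f x) = 0) ∧
    ((a : ℝ) < ξ →
      Mp n a b c p (fun x =>
          |x ⟨1, by omega⟩| ^ ξ * x ⟨0, by omega⟩ ^ a /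
            (x ⟨0, by omega⟩ ^ a - x ⟨1, by omega⟩ ^ a) * f x) =
        (1 / 2) * Mp n a b c p (fun x =>
          (|x ⟨1, by omega⟩| ^ (ξ - (a : ℝ)) - |x ⟨0, by omega⟩| ^ (ξ - (a : ℝ))) /
            (|x ⟨0, by omega⟩| ^ a - |x ⟨1, by omega⟩| ^ a) *
            |x ⟨0, by omega⟩ * x ⟨1, by omega⟩| ^ a * f x) ∧
      Mp n a b c p (fun x =>
          |x ⟨1, by omega⟩| ^ ξ * x ⟨0, by omega⟩ ^ a /
            (x ⟨0, by omega⟩ ^ a - x ⟨1, by omega⟩ ^ a) * f x) < 0) := by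
  have ha0 : a ≠ 0 := by omega
  have hij : (⟨0, by omega⟩ : Fin n) ≠ ⟨1, by omega⟩ := by simp
  refine ⟨fun hξ => Mp_cross_of_lt ha0 haeven hij hξ hsym hnonneg hpos hint_main,
    fun hξ => ?_, fun hξ => Mp_cross_of_gt ha0 haeven hij hξ hsym hnonneg hpos hint_main⟩
  subst hξ
  exact Mp_cross_self haeven hsym hint_main
end
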